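/- arXiv:2407.05613 — 3 statements merged into one kernel-verified Lean document; each statement's English description precedes it below -/
import Mathlib

section
/- For 1 ≤ p ≤ q < ∞ and x = (x_j)_{j∈ℤ} a sequence in ℓ^p_q (with the symmetric norm ‖·‖_{ℓ^p_q}), the function x̃(t) := Σ_{j∈ℤ} x_j χ_{[j,j+1)}(t) satisfies ‖x‖_{ℓ^p_q} ≤ ‖x̃‖_{M^p_q(ℝ)} ≤ 3^{1/p−1/q} ‖x‖_{ℓ^p_q}. -/
open scoped ENNReal BigOperators

/-- Discrete Morrey norm over symmetric index sets `S_{m,N} = {m-N, …, m+N}`. -/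
noncomputable def dnorm (p q : ℝ) (x : ℤ → ℝ) : ℝ≥0∞ :=
  ⨆ (m : ℤ) (N : ℕ), ((2 * N + 1 : ℝ≥0∞) ^ (1 / q - 1 / p)) *
    ENNReal.ofReal ((∑ j ∈ Finset.Icc (m - N) (m + N), |x j| ^ p) ^ (1 / p))

/-- Discrete Morrey norm over arbitrary index intervals `S*_{k,n} = {k, …, k+n}`. -/
noncomputable def dnormStar (p q : ℝ) (x : ℤ → ℝ) : ℝ≥0∞ :=
  ⨆ (k : ℤ) (n : ℕ), ((n + 1 : ℝ≥0∞) ^ (1 / q - 1 / p)) *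
    ENNReal.ofReal ((∑ j ∈ Finset.Icc k (k + n), |x j| ^ p) ^ (1 / p))

/-- Morrey norm on the real line. -/
noncomputable def mnormR (p q : ℝ) (f : ℝ → ℝ) : ℝ≥0∞ :=
  ⨆ (a : ℝ) (r : Set.Ioi (0 : ℝ)),
    ENNReal.ofReal ((2 * r.1) ^ (1 / q - 1 / p) *
      (∫ t in (a - r.1)..(a + r.1), |f t| ^ p) ^ (1 / p))

/-- The step function `x̃(t) = ∑_j x_j χ_{[j,j+1)}(t)`, i.e. `x̃(t) = x ⌊t⌋`. -/
noncomputable def step (x : ℤ → ℝ) : ℝ → ℝ := fun t => x ⌊t⌋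

/-- The set `S_n = {1 + 2^v + ⋯ + 2^{(n-1)v} + j·2^{nw} : j = 1, …, 2^{n(v-w)}}`. -/
def Sn (v w n : ℕ) : Set ℤ :=
  {m | ∃ j : ℕ, 1 ≤ j ∧ j ≤ 2 ^ (n * (v - w)) ∧
    m = ((∑ i ∈ Finset.range n, 2 ^ (i * v) : ℕ) : ℤ) + (j : ℤ) * 2 ^ (n * w)}

/-- The sequence with `x_j = 1` iff `j ∈ {0,1} ∪ ⋃_{n≥1} S_n`, `x_j = 0` otherwise. -/
noncomputable def xseq (v w : ℕ) : ℤ → ℝ :=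
  Set.indicator (({0, 1} : Set ℤ) ∪ ⋃ n ∈ Set.Ici 1, Sn v w n) 1

/-- `β_n = 1 + 2^v + ⋯ + 2^{nv}`. -/
def beta (v n : ℕ) : ℕ := ∑ i ∈ Finset.range (n + 1), 2 ^ (i * v)

/-! On an interval with integer endpoints the integral of `|x̃|^p` is the corresponding `ℓ^p` sum,
so the window of radius `N + 1/2` centred at `m + 1/2` reproduces each discrete term exactly.
Conversely, a window of radius `r > 1/2` lies in the integer window of radius `N = ⌈r⌉` around
`⌊a⌋`, whose length `2N + 1` is at most `3 · 2r`; as `1/q - 1/p ≤ 0` this costs the factor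
`3^(1/p - 1/q)`. A window with `2r ≤ 1` meets at most two cells, so there `|x̃|` is bounded by
one `|x_m|` and `(2r)^(1/q) ≤ 1`. -/

open MeasureTheory Set

section FloorStep

variable (g : ℤ → ℝ)

theorem eqOn_comp_floor_uIoo (j : ℤ) :
    EqOn (fun t : ℝ => g ⌊t⌋) (fun _ => g j) (uIoo (j : ℝ) (j + 1)) := by
  intro t ht
  rw [uIoo_of_le (by linarith)] at ht
  simp only [Int.floor_eq_iff.mpr ⟨ht.1.le, ht.2⟩]

theorem intervalIntegrable_comp_floor_unit (j : ℤ) :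
    IntervalIntegrable (fun t : ℝ => g ⌊t⌋) volume (j : ℝ) (j + 1) :=
  intervalIntegrable_const.congr_uIoo (eqOn_comp_floor_uIoo g j).symm

theorem integral_comp_floor_unit (j : ℤ) : ∫ t in (j : ℝ)..(j + 1), g ⌊t⌋ = g j := by
  rw [intervalIntegral.integral_congr_uIoo (eqOn_comp_floor_uIoo g j)]
  simp

theorem intervalIntegrable_comp_floor_intCast {k l : ℤ} (hkl : k ≤ l) :
    IntervalIntegrable (fun t : ℝ => g ⌊t⌋) volume (k : ℝ) l := by
  induction l, hkl using Int.leInduction with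
  | base => exact IntervalIntegrable.refl
  | succ l _ ih => exact_mod_cast ih.trans (intervalIntegrable_comp_floor_unit g l)

theorem intervalIntegrable_comp_floor (a b : ℝ) :
    IntervalIntegrable (fun t : ℝ => g ⌊t⌋) volume a b := by
  have hk : ⌊min a b⌋ ≤ ⌈max a b⌉ := (Int.floor_le_ceil _).trans (Int.ceil_mono min_le_max)
  refine (intervalIntegrable_comp_floor_intCast g hk).mono_set ?_
  rw [uIcc_of_le (a := (⌊min a b⌋ : ℝ)) (by exact_mod_cast hk)]
  exact Icc_subset_Icc (Int.floor_le _) (Int.le_ceil _)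

theorem integral_comp_floor_intCast {k l : ℤ} (hkl : k ≤ l) :
    ∫ t in (k : ℝ)..l, g ⌊t⌋ = ∑ j ∈ Finset.Ico k l, g j := by
  induction l, hkl using Int.leInduction with
  | base => simp
  | succ l hkl ih =>
    push_cast
    rw [← intervalIntegral.integral_add_adjacent_intervals (intervalIntegrable_comp_floor g _ _)
      (intervalIntegrable_comp_floor_unit g l), ih, integral_comp_floor_unit,
      Finset.sum_Ico_add_eq_sum_Ico_add_one hkl]

end FloorStep

section Morrey

variable (p q : ℝ)

noncomputable def dnormAt (x : ℤ → ℝ) (m : ℤ) (N : ℕ) : ℝ :=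
  (2 * N + 1 : ℝ) ^ (1 / q - 1 / p) * (∑ j ∈ Finset.Icc (m - N) (m + N), |x j| ^ p) ^ (1 / p)

noncomputable def mnormRAt (f : ℝ → ℝ) (a r : ℝ) : ℝ :=
  (2 * r) ^ (1 / q - 1 / p) * (∫ t in (a - r)..(a + r), |f t| ^ p) ^ (1 / p)

theorem dnorm_eq_iSup_ofReal_dnormAt (x : ℤ → ℝ) :
    dnorm p q x = ⨆ (m : ℤ) (N : ℕ), ENNReal.ofReal (dnormAt p q x m N) := by
  refine iSup_congr fun m => iSup_congr fun N => ?_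
  have h2N : (0 : ℝ) < 2 * N + 1 := by positivity
  rw [dnormAt, ENNReal.ofReal_mul (by positivity), ← ENNReal.ofReal_rpow_of_pos h2N]
  norm_cast

theorem ofReal_mnormRAt_le_mnormR (f : ℝ → ℝ) (a : ℝ) {r : ℝ} (hr : 0 < r) :
    ENNReal.ofReal (mnormRAt p q f a r) ≤ mnormR p q f :=
  le_iSup₂ (f := fun (a : ℝ) (r : Ioi (0 : ℝ)) => ENNReal.ofReal (mnormRAt p q f a r)) a ⟨r, hr⟩

theorem dnormAt_eq_mnormRAt_step (x : ℤ → ℝ) (m : ℤ) (N : ℕ) :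
    dnormAt p q x m N = mnormRAt p q (step x) (m + 1 / 2) (N + 1 / 2) := by
  have hlo : (m : ℝ) + 1 / 2 - (N + 1 / 2) = ((m - N : ℤ) : ℝ) := by push_cast; ring
  have hhi : (m : ℝ) + 1 / 2 + (N + 1 / 2) = ((m + N + 1 : ℤ) : ℝ) := by push_cast; ring
  rw [mnormRAt, hlo, hhi]
  simp only [step]
  rw [integral_comp_floor_intCast (fun j => |x j| ^ p) (by omega),
    Finset.Ico_add_one_right_eq_Icc, dnormAt, show (2 : ℝ) * (N + 1 / 2) = 2 * N + 1 by ring]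

theorem dnormAt_zero (hp : p ≠ 0) (x : ℤ → ℝ) (m : ℤ) : dnormAt p q x m 0 = |x m| := by
  simp [dnormAt, one_div, Real.rpow_rpow_inv (abs_nonneg _) hp]

end Morrey

section Estimates

variable {p q : ℝ} (hp : 0 < p) (hpq : p ≤ q) (x : ℤ → ℝ) (a : ℝ)
include hp hpq

theorem exists_mnormRAt_step_le_abs {r : ℝ} (hr : 0 < r) (hr1 : 2 * r ≤ 1) :
    ∃ m, mnormRAt p q (step x) a r ≤ |x m| := by
  set j := ⌊a - r⌋
  obtain ⟨m, hjm, hj1m⟩ : ∃ m, |x j| ≤ |x m| ∧ |x (j + 1)| ≤ |x m| := by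
    rcases le_total |x j| |x (j + 1)| with h | h
    · exact ⟨j + 1, h, le_rfl⟩
    · exact ⟨j, le_rfl, h⟩
  have hbound : ∀ t ∈ Icc (a - r) (a + r), |x ⌊t⌋| ^ p ≤ |x m| ^ p := by
    intro t ht
    have h1 : j ≤ ⌊t⌋ := Int.floor_mono ht.1
    have h2 : ⌊t⌋ ≤ j + 1 := by
      rw [← Int.floor_add_one]
      exact Int.floor_mono (by linarith [ht.2])
    have : |x ⌊t⌋| ≤ |x m| := by
      rcases (by omega : ⌊t⌋ = j ∨ ⌊t⌋ = j + 1) with h | h <;> rw [h] <;> assumption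
    exact Real.rpow_le_rpow (abs_nonneg _) this hp.le
  have hI : ∫ t in (a - r)..(a + r), |x ⌊t⌋| ^ p ≤ 2 * r * |x m| ^ p := by
    have := intervalIntegral.integral_mono_on (by linarith)
      (intervalIntegrable_comp_floor (fun j => |x j| ^ p) _ _) intervalIntegrable_const hbound
    simpa [show a + r - (a - r) = 2 * r by ring] using this
  have hI0 : 0 ≤ ∫ t in (a - r)..(a + r), |x ⌊t⌋| ^ p :=
    intervalIntegral.integral_nonneg (by linarith) fun t _ => by positivity
  refine ⟨m, ?_⟩
  calc mnormRAt p q (step x) a r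
      ≤ (2 * r) ^ (1 / q - 1 / p) * (2 * r * |x m| ^ p) ^ (1 / p) := by
        unfold mnormRAt step; gcongr
    _ = (2 * r) ^ (1 / q) * |x m| := by
        rw [Real.mul_rpow (x := 2 * r) (by positivity) (by positivity), one_div p,
          Real.rpow_rpow_inv (abs_nonneg _) hp.ne', ← mul_assoc, ← Real.rpow_add (by positivity)]
        ring_nf
    _ ≤ |x m| := mul_le_of_le_one_left (abs_nonneg _)
        (Real.rpow_le_one (by positivity) hr1 (by have := hp.trans_le hpq; positivity))

theorem mnormRAt_step_le_dnormAt {r : ℝ} (hr : 1 < 2 * r) :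
    mnormRAt p q (step x) a r ≤ 3 ^ (1 / p - 1 / q) * dnormAt p q x ⌊a⌋ ⌈r⌉₊ := by
  set N := ⌈r⌉₊
  set m := ⌊a⌋
  have hr0 : 0 < r := by linarith
  have hθ : 1 / q - 1 / p ≤ 0 := by
    have := one_div_le_one_div_of_le hp hpq
    linarith
  have hN : 2 * (N : ℝ) + 1 ≤ 3 * (2 * r) := by
    rcases le_or_gt r 1 with hr1 | hr1
    · have : (N : ℝ) ≤ 1 := by exact_mod_cast Nat.ceil_le.mpr (by exact_mod_cast hr1)
      linarith
    · linarith [Nat.ceil_lt_add_one (by linarith : 0 ≤ r)]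
  have hscale : (2 * r) ^ (1 / q - 1 / p) ≤ 3 ^ (1 / p - 1 / q) * (2 * N + 1) ^ (1 / q - 1 / p) :=
    calc (2 * r) ^ (1 / q - 1 / p) = 3 ^ (1 / p - 1 / q) * (3 * (2 * r)) ^ (1 / q - 1 / p) := by
          rw [Real.mul_rpow (x := 3) (by norm_num) (by positivity), ← mul_assoc,
            ← Real.rpow_add (by norm_num)]
          simp
      _ ≤ 3 ^ (1 / p - 1 / q) * (2 * N + 1) ^ (1 / q - 1 / p) :=
          mul_le_mul_of_nonneg_left (Real.rpow_le_rpow_of_nonpos (by positivity) hN hθ)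
            (by positivity)
  have hlo : ((m - N : ℤ) : ℝ) ≤ a - r := by
    push_cast
    linarith [Int.floor_le a, Nat.le_ceil r]
  have hhi : a + r ≤ ((m + N + 1 : ℤ) : ℝ) := by
    push_cast
    linarith [Int.lt_floor_add_one a, Nat.le_ceil r]
  have hI : ∫ t in (a - r)..(a + r), |x ⌊t⌋| ^ p ≤
      ∑ j ∈ Finset.Icc (m - N) (m + N), |x j| ^ p := by
    rw [← Finset.Ico_add_one_right_eq_Icc, ← integral_comp_floor_intCast _ (by omega)]
    exact intervalIntegral.integral_mono_interval hlo (by linarith) hhi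
      (ae_of_all _ fun t => by positivity) (intervalIntegrable_comp_floor (fun j => |x j| ^ p) _ _)
  have hI0 : 0 ≤ ∫ t in (a - r)..(a + r), |x ⌊t⌋| ^ p :=
    intervalIntegral.integral_nonneg (by linarith) fun t _ => by positivity
  calc mnormRAt p q (step x) a r
      ≤ (3 ^ (1 / p - 1 / q) * (2 * N + 1) ^ (1 / q - 1 / p)) *
          (∑ j ∈ Finset.Icc (m - N) (m + N), |x j| ^ p) ^ (1 / p) := by
        unfold mnormRAt step; gcongr
    _ = 3 ^ (1 / p - 1 / q) * dnormAt p q x m N := by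
        rw [dnormAt, mul_assoc]

theorem exists_mnormRAt_step_le {r : ℝ} (hr : 0 < r) :
    ∃ m N, mnormRAt p q (step x) a r ≤ 3 ^ (1 / p - 1 / q) * dnormAt p q x m N := by
  rcases le_or_gt (2 * r) 1 with hr1 | hr1
  · obtain ⟨m, hm⟩ := exists_mnormRAt_step_le_abs hp hpq x a hr hr1
    refine ⟨m, 0, hm.trans ?_⟩
    rw [dnormAt_zero p q hp.ne']
    refine le_mul_of_one_le_left (abs_nonneg _) (Real.one_le_rpow (by norm_num) ?_)
    linarith [one_div_le_one_div_of_le hp hpq]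
  · exact ⟨⌊a⌋, ⌈r⌉₊, mnormRAt_step_le_dnormAt hp hpq x a hr1⟩

end Estimates

theorem stmt5_general (p q : ℝ) (hp : 1 ≤ p) (hpq : p ≤ q) (x : ℤ → ℝ) :
    dnorm p q x ≤ mnormR p q (step x) ∧
      mnormR p q (step x) ≤ ENNReal.ofReal ((3 : ℝ) ^ (1 / p - 1 / q)) * dnorm p q x := by
  have hp0 : 0 < p := by linarith
  rw [dnorm_eq_iSup_ofReal_dnormAt]
  constructor
  · refine iSup₂_le fun m N => ?_
    rw [dnormAt_eq_mnormRAt_step]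
    exact ofReal_mnormRAt_le_mnormR p q _ _ (by positivity)
  · refine iSup₂_le fun a r => ?_
    obtain ⟨m, N, h⟩ := exists_mnormRAt_step_le hp0 hpq x a r.2
    calc ENNReal.ofReal (mnormRAt p q (step x) a r)
        ≤ ENNReal.ofReal (3 ^ (1 / p - 1 / q)) * ENNReal.ofReal (dnormAt p q x m N) := by
          rw [← ENNReal.ofReal_mul (by positivity)]
          exact ENNReal.ofReal_le_ofReal h
      _ ≤ _ := by
          gcongr
          exact le_iSup₂ (f := fun (m : ℤ) (N : ℕ) => ENNReal.ofReal (dnormAt p q x m N)) m N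

theorem stmt5 (p q : ℝ) (hp : 1 ≤ p) (hpq : p ≤ q) (x : ℤ → ℝ)
    (hx : dnorm p q x ≠ ⊤) :
    dnorm p q x ≤ mnormR p q (step x) ∧
      mnormR p q (step x) ≤ ENNReal.ofReal ((3 : ℝ) ^ (1 / p - 1 / q)) * dnorm p q x :=
  stmt5_general p q hp hpq x
end

section
/- Let 1 ≤ p₁ < p₂ < q < ∞ and v, w ∈ ℕ with q/p₂ < v/w. With x the sequence defined by x_j = 1 iff j ∈ {0,1} ∪ ⋃_{n≥1} S_n where S_n = {1 + 2^v + ⋯ + 2^{(n−1)v} + j·2^{nw} : j = 1, …, 2^{n(v−w)}}, we have for every n ∈ ℕ₀, writing β_n = 1 + 2^v + ⋯ + 2^{nv}, the lower bound (β_n + 1)^{1/q − 1/p₂} (Σ_{j=0}^{β_n} |x_j|^{p₂})^{1/p₂} > 3^{1/q − 1/p₂} · 2^{n(v/q − w/p₂)}; in particular ‖x‖*_{ℓ^{p₂}_q} = ∞. -/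
open scoped ENNReal BigOperators

/-!
The window `{0, …, β_n}` has length `β_n + 1 ≤ 3 · 2^{nv}` and contains the `1 + 2^{n(v-w)}`
ones of `x` at `0` and on `S_n`. Since `1/q - 1/p₂ < 0`, its Morrey quotient is therefore at least
`(3 · 2^{nv})^{1/q - 1/p₂} (2^{n(v-w)})^{1/p₂} = 3^{1/q - 1/p₂} 2^{n(v/q - w/p₂)}`, and this tends
to infinity because `q/p₂ < v/w` makes the exponent `v/q - w/p₂` positive.
-/

open Filter Finset

lemma beta_succ (v n : ℕ) : beta v (n + 1) = beta v n + 2 ^ ((n + 1) * v) :=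
  sum_range_succ _ _

lemma beta_add_one_le {v : ℕ} (hv : 1 ≤ v) (n : ℕ) : beta v n + 1 ≤ 2 * 2 ^ (n * v) := by
  induction n with
  | zero => simp [beta]
  | succ n ih =>
    have : 2 * 2 ^ (n * v) ≤ 2 ^ ((n + 1) * v) := by
      rw [← pow_succ']
      exact Nat.pow_le_pow_right two_pos (by nlinarith)
    rw [beta_succ]
    omega

def SnFinset (v w n : ℕ) : Finset ℤ :=
  (Icc 1 (2 ^ (n * (v - w)))).image fun j : ℕ =>
    ((∑ i ∈ range n, 2 ^ (i * v) : ℕ) : ℤ) + (j : ℤ) * 2 ^ (n * w)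

lemma coe_SnFinset (v w n : ℕ) : (SnFinset v w n : Set ℤ) = Sn v w n := by
  ext m
  simp only [SnFinset, coe_image, coe_Icc, Set.mem_image, Set.mem_Icc, Sn, Set.mem_ofPred_eq]
  constructor
  · rintro ⟨j, ⟨hj1, hj2⟩, rfl⟩
    exact ⟨j, hj1, hj2, rfl⟩
  · rintro ⟨j, hj1, hj2, rfl⟩
    exact ⟨j, ⟨hj1, hj2⟩, rfl⟩

lemma card_SnFinset (v w n : ℕ) : (SnFinset v w n).card = 2 ^ (n * (v - w)) := by
  rw [SnFinset, card_image_of_injective, Nat.card_Icc, Nat.add_sub_cancel]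
  intro a b hab
  simpa using hab

lemma xseq_eq_one_of_mem_Sn {v w n : ℕ} {m : ℤ} (hm : m ∈ Sn v w n) : xseq v w m = 1 := by
  refine Set.indicator_of_mem ?_ 1
  rcases Nat.eq_zero_or_pos n with rfl | hn
  · -- `S_0 = {1}`
    obtain ⟨j, hj1, hj2, rfl⟩ := hm
    obtain rfl : j = 1 := by simp at hj2; omega
    simp
  · exact Or.inr (Set.mem_biUnion (Set.mem_Ici.mpr hn) hm)

lemma Sn_subset_Icc {v w : ℕ} (hwv : w ≤ v) (n : ℕ) :
    Sn v w n ⊆ Set.Icc 1 (beta v n : ℤ) := by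
  rintro m ⟨j, hj1, hj2, rfl⟩
  have hpow : 2 ^ (n * (v - w)) * 2 ^ (n * w) = 2 ^ (n * v) := by
    rw [← pow_add, ← mul_add, Nat.sub_add_cancel hwv]
  have hj : j * 2 ^ (n * w) ≤ 2 ^ (n * v) := hpow ▸ Nat.mul_le_mul_right _ hj2
  have hj' : 1 ≤ j * 2 ^ (n * w) := Nat.mul_le_mul hj1 Nat.one_le_two_pow
  have hbeta : beta v n = ∑ i ∈ range n, 2 ^ (i * v) + 2 ^ (n * v) := sum_range_succ _ _
  constructor <;> norm_cast <;> omega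

lemma one_add_two_pow_le_sum_window {v w : ℕ} (hwv : w ≤ v) (p : ℝ) (n : ℕ) :
    (1 + 2 ^ (n * (v - w)) : ℝ) ≤ ∑ j ∈ Icc (0 : ℤ) (beta v n), |xseq v w j| ^ p := by
  classical
  have hSn : ∀ m ∈ SnFinset v w n, m ∈ Set.Icc 1 (beta v n : ℤ) := fun m hm =>
    Sn_subset_Icc hwv n (by rw [← coe_SnFinset]; exact hm)
  have h0 : (0 : ℤ) ∉ SnFinset v w n := fun h => by simpa using (hSn 0 h).1
  have hsub : insert 0 (SnFinset v w n) ⊆ Icc (0 : ℤ) (beta v n) := by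
    refine insert_subset (by simp) fun m hm => ?_
    have := hSn m hm
    exact mem_Icc.mpr ⟨by linarith [this.1], this.2⟩
  have hone : ∀ m ∈ insert 0 (SnFinset v w n), |xseq v w m| ^ p = 1 := by
    intro m hm
    rcases mem_insert.mp hm with rfl | hm
    · simp [xseq]
    · rw [xseq_eq_one_of_mem_Sn (by rw [← coe_SnFinset]; exact hm)]
      simp
  calc (1 + 2 ^ (n * (v - w)) : ℝ) = ∑ m ∈ insert 0 (SnFinset v w n), |xseq v w m| ^ p := by
        rw [sum_congr rfl hone, sum_const, card_insert_of_notMem h0, card_SnFinset]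
        ring
    _ ≤ _ := sum_le_sum_of_subset_of_nonneg hsub fun _ _ _ => by positivity

lemma three_rpow_mul_two_rpow_lt {p q : ℝ} (hp : 0 < p) (hpq : p < q) {v w : ℕ} (hwv : w < v)
    (n : ℕ) :
    (3 : ℝ) ^ (1 / q - 1 / p) * (2 : ℝ) ^ ((n : ℝ) * ((v : ℝ) / q - (w : ℝ) / p)) <
      ((beta v n : ℝ) + 1) ^ (1 / q - 1 / p) * (1 + (2 : ℝ) ^ (n * (v - w))) ^ (1 / p) := by
  have hα : 1 / q - 1 / p ≤ 0 := by
    linarith [one_div_lt_one_div_of_lt hp hpq]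
  have hbeta : (beta v n : ℝ) + 1 ≤ 3 * 2 ^ (n * v) := by
    have : ((beta v n + 1 : ℕ) : ℝ) ≤ 2 * 2 ^ (n * v) := by
      exact_mod_cast beta_add_one_le (by omega) n
    push_cast at this
    linarith [pow_pos two_pos (n * v) (M₀ := ℝ)]
  have hsplit : (3 : ℝ) ^ (1 / q - 1 / p) * (2 : ℝ) ^ ((n : ℝ) * ((v : ℝ) / q - (w : ℝ) / p)) =
      (3 * (2 : ℝ) ^ (n * v)) ^ (1 / q - 1 / p) * ((2 : ℝ) ^ (n * (v - w))) ^ (1 / p) := by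
    rw [Real.mul_rpow (by norm_num) (by positivity), mul_assoc, ← Real.rpow_natCast,
      ← Real.rpow_natCast, ← Real.rpow_mul zero_le_two, ← Real.rpow_mul zero_le_two,
      ← Real.rpow_add two_pos]
    congr 2
    push_cast [Nat.cast_sub hwv.le]
    field_simp
    ring
  rw [hsplit]
  exact mul_lt_mul' (Real.rpow_le_rpow_of_nonpos (by positivity) hbeta hα)
    (Real.rpow_lt_rpow (by positivity) (lt_one_add _) (by positivity)) (by positivity)
    (by positivity)

lemma window_le_dnormStar (p q : ℝ) (x : ℤ → ℝ) (k : ℤ) (n : ℕ) :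
    ((n + 1 : ℝ≥0∞) ^ (1 / q - 1 / p)) *
        ENNReal.ofReal ((∑ j ∈ Icc k (k + n), |x j| ^ p) ^ (1 / p)) ≤ dnormStar p q x :=
  le_iSup₂ (α := ℝ≥0∞) (f := fun (_ : ℤ) (_ : ℕ) => _) k n

lemma ENNReal.natCast_add_one_rpow_mul_ofReal (n : ℕ) (a b : ℝ) :
    ((n : ℝ≥0∞) + 1) ^ a * ENNReal.ofReal b = ENNReal.ofReal (((n : ℝ) + 1) ^ a * b) := by
  rw [← ENNReal.ofReal_natCast, ← ENNReal.ofReal_one, ← ENNReal.ofReal_add (by positivity)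
    zero_le_one, ENNReal.ofReal_rpow_of_pos (by positivity), ENNReal.ofReal_mul (by positivity)]

lemma ENNReal.eq_top_of_tendsto_atTop_of_ofReal_le {ι : Type*} {l : Filter ι} [l.NeBot]
    {f : ι → ℝ} (hf : Tendsto f l atTop) {D : ℝ≥0∞} (hD : ∀ i, ENNReal.ofReal (f i) ≤ D) :
    D = ⊤ :=
  top_unique (le_of_tendsto' (ENNReal.tendsto_ofReal_atTop.comp hf) hD)

lemma tendsto_rpow_natCast_mul_atTop {b a : ℝ} (hb : 1 < b) (ha : 0 < a) :
    Tendsto (fun n : ℕ => b ^ ((n : ℝ) * a)) atTop atTop := by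
  simp_rw [mul_comm _ a, Real.rpow_mul_natCast (zero_le_one.trans hb.le)]
  exact tendsto_pow_atTop_atTop_of_one_lt (Real.one_lt_rpow hb ha)

theorem stmt8_general (p₁ p₂ q : ℝ) (hp₁ : 1 ≤ p₁) (h12 : p₁ < p₂) (h2q : p₂ < q)
    (v w : ℕ) (h₁ : q / p₂ < (v : ℝ) / w) :
    (∀ n : ℕ,
      ((beta v n : ℝ≥0∞) + 1) ^ (1 / q - 1 / p₂) *
          ENNReal.ofReal ((∑ j ∈ Finset.Icc (0 : ℤ) (beta v n), |xseq v w j| ^ p₂) ^ (1 / p₂))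
        > ENNReal.ofReal ((3 : ℝ) ^ (1 / q - 1 / p₂) *
            (2 : ℝ) ^ ((n : ℝ) * ((v : ℝ) / q - (w : ℝ) / p₂)))) ∧
    dnormStar p₂ q (xseq v w) = ⊤ := by
  have hp₂ : 0 < p₂ := by linarith
  have hq : 0 < q := hp₂.trans h2q
  obtain ⟨hw, hwv⟩ : (0 : ℝ) < w ∧ (w : ℝ) < v :=
    (one_lt_div_iff.mp (((one_lt_div hp₂).mpr h2q).trans h₁)).resolve_right
      fun h => (Nat.cast_nonneg w).not_gt h.1
  have hwv' : w < v := by exact_mod_cast hwv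
  have hexp : 0 < (v : ℝ) / q - w / p₂ := by
    rw [div_lt_div_iff₀ hp₂ hw] at h₁
    rw [sub_pos, div_lt_div_iff₀ hp₂ hq]
    linarith
  have hwindow : ∀ n : ℕ, ((beta v n : ℝ≥0∞) + 1) ^ (1 / q - 1 / p₂) *
          ENNReal.ofReal ((∑ j ∈ Icc (0 : ℤ) (beta v n), |xseq v w j| ^ p₂) ^ (1 / p₂))
        > ENNReal.ofReal ((3 : ℝ) ^ (1 / q - 1 / p₂) *
            (2 : ℝ) ^ ((n : ℝ) * ((v : ℝ) / q - (w : ℝ) / p₂))) := fun n => by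
    have hsum := one_add_two_pow_le_sum_window hwv'.le p₂ n
    rw [ENNReal.natCast_add_one_rpow_mul_ofReal, gt_iff_lt,
      ENNReal.ofReal_lt_ofReal_iff_of_nonneg (by positivity)]
    refine (three_rpow_mul_two_rpow_lt hp₂ h2q hwv' n).trans_le ?_
    gcongr
  refine ⟨hwindow, ENNReal.eq_top_of_tendsto_atTop_of_ofReal_le
    ((tendsto_rpow_natCast_mul_atTop one_lt_two hexp).const_mul_atTop (by positivity))
    fun n => (hwindow n).le.trans ?_⟩
  simpa using window_le_dnormStar p₂ q (xseq v w) 0 (beta v n)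

theorem stmt8 (p₁ p₂ q : ℝ) (hp₁ : 1 ≤ p₁) (h12 : p₁ < p₂) (h2q : p₂ < q)
    (v w : ℕ) (hw : 0 < w) (h₁ : q / p₂ < (v : ℝ) / w) :
    (∀ n : ℕ,
      ((beta v n : ℝ≥0∞) + 1) ^ (1 / q - 1 / p₂) *
          ENNReal.ofReal ((∑ j ∈ Finset.Icc (0 : ℤ) (beta v n), |xseq v w j| ^ p₂) ^ (1 / p₂))
        > ENNReal.ofReal ((3 : ℝ) ^ (1 / q - 1 / p₂) *
            (2 : ℝ) ^ ((n : ℝ) * ((v : ℝ) / q - (w : ℝ) / p₂)))) ∧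
    dnormStar p₂ q (xseq v w) = ⊤ :=
  stmt8_general p₁ p₂ q hp₁ h12 h2q v w h₁
end

section
/- Let 1 ≤ p₁ < q < ∞ and v, w ∈ ℕ with v/w < q/p₁ and v > w. Let x be the sequence with x_j = 1 iff j ∈ {0,1} ∪ ⋃_{n≥1} S_n, where S_n = {1 + 2^v + ⋯ + 2^{(n−1)v} + j·2^{nw} : j = 1, …, 2^{n(v−w)}}. Then ‖x‖*_{ℓ^{p₁}_q} ≤ max(1 + 2^{v−w}, 2^{(1+v−w)/p₁}) < ∞, so x ∈ ℓ^{p₁}_q. -/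
open scoped ENNReal BigOperators

/-!
The level `S_n` is an arithmetic progression of `2^{n(v-w)}` points with spacing `2^{nw}`,
lying in `(β_{n-1}, β_n]`. For a window of `N = n + 1` consecutive integers, choose `L` with
`2^{Lv} ≤ N < 2^{(L+1)v}`: the levels `≤ L` have at most `2^{L(v-w)+1} ≤ 2 N^{(v-w)/v}` points in
total, while all points of the levels `> L` are `2^{(L+1)w}`-separated, so at most
`N / 2^{(L+1)w} + 1 ≤ 2 N^{(v-w)/v}` of them meet the window. Since `v/w < q/p₁`, the exponent
`(v-w)/v` is at most `1 - p₁/q`, which is exactly what makes the Morrey quotient bounded.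
-/

open Finset

open scoped Classical

def levelOffset (v n : ℕ) : ℕ := ∑ i ∈ range n, 2 ^ (i * v)

lemma levelOffset_succ (v n : ℕ) : levelOffset v (n + 1) = levelOffset v n + 2 ^ (n * v) :=
  sum_range_succ _ _

lemma levelOffset_mono (v : ℕ) : Monotone (levelOffset v) := fun _ _ h =>
  sum_le_sum_of_subset (range_subset_range.mpr h)

section Levels

variable {v w n : ℕ}

lemma mem_Sn {x : ℤ} : x ∈ Sn v w n ↔
    ∃ j : ℕ, 1 ≤ j ∧ j ≤ 2 ^ (n * (v - w)) ∧ x = levelOffset v n + j * 2 ^ (n * w) :=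
  Iff.rfl

lemma card_filter_mem_Sn_le (s : Finset ℤ) : #{x ∈ s | x ∈ Sn v w n} ≤ 2 ^ (n * (v - w)) := by
  have hsub : {x ∈ s | x ∈ Sn v w n} ⊆
      (Icc 1 (2 ^ (n * (v - w)))).image fun j : ℕ => (levelOffset v n : ℤ) + j * 2 ^ (n * w) := by
    intro x hx
    obtain ⟨j, hj1, hj2, rfl⟩ := mem_Sn.mp (mem_filter.mp hx).2
    exact mem_image.mpr ⟨j, mem_Icc.mpr ⟨hj1, hj2⟩, rfl⟩
  calc _ ≤ _ := card_le_card hsub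
    _ ≤ #(Icc 1 (2 ^ (n * (v - w)))) := card_image_le
    _ = _ := by simp

lemma one_mem_Sn_zero : (1 : ℤ) ∈ Sn v w 0 :=
  ⟨1, le_rfl, by simp, by simp⟩

lemma Sn_bounds (hwv : w ≤ v) {x : ℤ} (hx : x ∈ Sn v w n) :
    levelOffset v n + 2 ^ (n * w) ≤ x ∧ x ≤ levelOffset v (n + 1) := by
  obtain ⟨j, hj1, hj2, rfl⟩ := mem_Sn.mp hx
  have hpow : (2 : ℤ) ^ (n * (v - w)) * 2 ^ (n * w) = 2 ^ (n * v) := by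
    rw [← pow_add, ← Nat.mul_add, Nat.sub_add_cancel hwv]
  have hj1' : (1 : ℤ) ≤ j := by exact_mod_cast hj1
  have hj2' : (j : ℤ) ≤ 2 ^ (n * (v - w)) := by exact_mod_cast hj2
  rw [levelOffset_succ]
  push_cast
  constructor <;> nlinarith [pow_pos (two_pos : (0 : ℤ) < 2) (n * w)]

lemma Sn_gap (hwv : w ≤ v) {m m' : ℕ} {x y : ℤ} (hx : x ∈ Sn v w m) (hy : y ∈ Sn v w m')
    (hxy : x < y) : x + 2 ^ (m' * w) ≤ y := by
  rcases lt_trichotomy m m' with h | rfl | h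
  · have hoff := levelOffset_mono v (Nat.succ_le_of_lt h)
    have hx_le := (Sn_bounds hwv hx).2
    have hy_ge := (Sn_bounds hwv hy).1
    linarith
  · obtain ⟨i, -, -, rfl⟩ := mem_Sn.mp hx
    obtain ⟨j, -, -, rfl⟩ := mem_Sn.mp hy
    have hij : (i : ℤ) + 1 ≤ j := by
      have : (i : ℤ) * 2 ^ (m * w) < j * 2 ^ (m * w) := by linarith
      exact_mod_cast (lt_of_mul_lt_mul_right this (by positivity))
    nlinarith [pow_pos (two_pos : (0 : ℤ) < 2) (m * w)]
  · have hoff := levelOffset_mono v (Nat.succ_le_of_lt h)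
    have hx_ge := (Sn_bounds hwv hx).1
    have hy_le := (Sn_bounds hwv hy).2
    linarith [pow_pos (two_pos : (0 : ℤ) < 2) (m * w)]

end Levels

lemma card_le_of_separated {s : Finset ℤ} {k : ℤ} {n δ : ℕ} (hδ : 0 < δ)
    (hs : s ⊆ Icc k (k + n)) (hsep : ∀ x ∈ s, ∀ y ∈ s, x < y → x + δ ≤ y) :
    #s ≤ n / δ + 1 := by
  have hmaps : Set.MapsTo (fun x => (x - k).toNat / δ) s (range (n / δ + 1)) := by
    intro x hx
    have := mem_Icc.mp (hs hx)
    simp only [coe_range, Set.mem_Iio, Nat.lt_succ_iff]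
    exact Nat.div_le_div_right (by omega)
  refine (card_le_card_of_injOn _ hmaps (StrictMonoOn.injOn fun x hx y hy hxy => ?_)).trans
    (card_range _).le
  have hk := (mem_Icc.mp (hs hx)).1
  have hxy' := hsep x hx y hy hxy
  calc (x - k).toNat / δ < (x - k).toNat / δ + 1 := Nat.lt_succ_self _
    _ = ((x - k).toNat + δ) / δ := (Nat.add_div_right _ hδ).symm
    _ ≤ (y - k).toNat / δ := Nat.div_le_div_right (by omega)

lemma sum_range_two_pow_mul_lt {a : ℕ} (ha : 0 < a) (L : ℕ) :
    ∑ m ∈ range (L + 1), 2 ^ (m * a) < 2 ^ (L * a + 1) := by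
  rw [← sum_image (g := (· * a)) fun _ _ _ _ h => Nat.eq_of_mul_eq_mul_right ha h]
  refine Nat.geomSum_lt le_rfl fun k hk => ?_
  obtain ⟨m, hm, rfl⟩ := mem_image.mp hk
  have := Nat.mul_le_mul_right a (Nat.lt_succ_iff.mp (mem_range.mp hm))
  omega

def xseqSupport (v w : ℕ) : Set ℤ := ({0, 1} : Set ℤ) ∪ ⋃ n ∈ Set.Ici 1, Sn v w n

lemma xseq_eq_indicator (v w : ℕ) : xseq v w = (xseqSupport v w).indicator 1 := rfl

lemma eq_zero_or_exists_mem_Sn_of_mem_xseqSupport {v w : ℕ} {x : ℤ}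
    (hx : x ∈ xseqSupport v w) : x = 0 ∨ ∃ m, x ∈ Sn v w m := by
  rcases hx with (rfl | rfl) | hx
  · exact Or.inl rfl
  · exact Or.inr ⟨0, one_mem_Sn_zero⟩
  · obtain ⟨m, -, hm⟩ := Set.mem_iUnion₂.mp hx
    exact Or.inr ⟨m, hm⟩

lemma card_filter_mem_xseqSupport_le {v w : ℕ} (hwv : w < v) (k : ℤ) (n L : ℕ) :
    #{x ∈ Icc k (k + n) | x ∈ xseqSupport v w} ≤
      2 ^ (L * (v - w) + 1) + (n / 2 ^ ((L + 1) * w) + 1) := by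
  set I := Icc k (k + n)
  set low := insert 0 ((range (L + 1)).biUnion fun m => {x ∈ I | x ∈ Sn v w m})
  set high := {x ∈ I | ∃ m, L < m ∧ x ∈ Sn v w m}
  have hsub : {x ∈ I | x ∈ xseqSupport v w} ⊆ low ∪ high := by
    intro x hx
    obtain ⟨hxI, hx⟩ := mem_filter.mp hx
    rcases eq_zero_or_exists_mem_Sn_of_mem_xseqSupport hx with rfl | ⟨m, hm⟩
    · exact mem_union_left _ (mem_insert_self _ _)
    rcases le_or_gt m L with hmL | hmL
    · exact mem_union_left _ <| mem_insert_of_mem <|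
        mem_biUnion.mpr ⟨m, mem_range.mpr (by omega), mem_filter.mpr ⟨hxI, hm⟩⟩
    · exact mem_union_right _ (mem_filter.mpr ⟨hxI, m, hmL, hm⟩)
  have hlow : #low ≤ 2 ^ (L * (v - w) + 1) :=
    calc #low ≤ ∑ m ∈ range (L + 1), 2 ^ (m * (v - w)) + 1 :=
          (card_insert_le _ _).trans <| Nat.add_le_add_right
            (card_biUnion_le.trans (sum_le_sum fun m _ => card_filter_mem_Sn_le I)) 1
      _ ≤ _ := sum_range_two_pow_mul_lt (by omega) L
  have hhigh : #high ≤ n / 2 ^ ((L + 1) * w) + 1 := by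
    refine card_le_of_separated (by positivity) (filter_subset _ _) fun x hx y hy hxy => ?_
    obtain ⟨-, _, -, hxm⟩ := mem_filter.mp hx
    obtain ⟨-, m, hm, hym⟩ := mem_filter.mp hy
    calc x + ((2 ^ ((L + 1) * w) : ℕ) : ℤ) ≤ x + 2 ^ (m * w) := by
          push_cast
          gcongr
          · norm_num
          · omega
      _ ≤ y := Sn_gap hwv.le hxm hym hxy
  calc _ ≤ #(low ∪ high) := card_le_card hsub
    _ ≤ #low + #high := card_union_le _ _
    _ ≤ _ := add_le_add hlow hhigh

lemma two_pow_mul_rpow_div {v : ℕ} (hv : v ≠ 0) (a b : ℕ) :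
    ((2 : ℝ) ^ (a * v)) ^ ((b : ℝ) / v) = 2 ^ (a * b) := by
  rw [← Real.rpow_natCast, ← Real.rpow_mul zero_le_two, ← Real.rpow_natCast]
  congr 1
  push_cast
  field_simp

lemma card_filter_mem_xseqSupport_le_rpow {v w : ℕ} (hwv : w < v) (k : ℤ) (n : ℕ) :
    (#{x ∈ Icc k (k + n) | x ∈ xseqSupport v w} : ℝ) ≤
      4 * ((n : ℝ) + 1) ^ (((v : ℝ) - w) / v) := by
  have hv : v ≠ 0 := by omega
  set N := n + 1
  set T := Nat.log (2 ^ v) N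
  set e := ((v : ℝ) - w) / v
  have hN : (1 : ℝ) ≤ N := by simp [N]
  have he : 0 ≤ e := div_nonneg (sub_nonneg.mpr (by exact_mod_cast hwv.le)) v.cast_nonneg
  have hT₁ : 2 ^ (T * v) ≤ N := by
    rw [mul_comm, pow_mul]; exact Nat.pow_log_le_self _ (Nat.succ_ne_zero n)
  have hT₂ : N < 2 ^ ((T + 1) * v) := by
    rw [mul_comm, pow_mul]; exact Nat.lt_pow_succ_log_self (Nat.one_lt_two_pow hv) N
  have hlow : (2 : ℝ) ^ (T * (v - w)) ≤ (N : ℝ) ^ e := by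
    rw [← two_pow_mul_rpow_div hv, Nat.cast_sub hwv.le]
    exact Real.rpow_le_rpow (by positivity) (by exact_mod_cast hT₁) he
  have hhigh : ((n / 2 ^ ((T + 1) * w) : ℕ) : ℝ) ≤ (N : ℝ) ^ e := by
    have hsplit : (N : ℝ) = (N : ℝ) ^ e * (N : ℝ) ^ ((w : ℝ) / v) := by
      rw [← Real.rpow_add (by positivity),
        show e + (w : ℝ) / v = 1 by simp only [e]; field_simp; ring, Real.rpow_one]
    have hroot : (N : ℝ) ^ ((w : ℝ) / v) ≤ 2 ^ ((T + 1) * w) := by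
      rw [← two_pow_mul_rpow_div hv]
      exact Real.rpow_le_rpow (by positivity) (by exact_mod_cast hT₂.le) (by positivity)
    calc ((n / 2 ^ ((T + 1) * w) : ℕ) : ℝ) ≤ (N : ℝ) / 2 ^ ((T + 1) * w) := by
          refine Nat.cast_div_le.trans ?_
          push_cast
          gcongr
          simp [N]
      _ ≤ (N : ℝ) ^ e := by
          rw [div_le_iff₀ (by positivity)]
          calc (N : ℝ) = (N : ℝ) ^ e * (N : ℝ) ^ ((w : ℝ) / v) := hsplit
            _ ≤ (N : ℝ) ^ e * 2 ^ ((T + 1) * w) := by gcongr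
  have hone : (1 : ℝ) ≤ (N : ℝ) ^ e := Real.one_le_rpow hN he
  have hcount := card_filter_mem_xseqSupport_le hwv k n T
  calc (#{x ∈ Icc k (k + n) | x ∈ xseqSupport v w} : ℝ)
      ≤ 2 * 2 ^ (T * (v - w)) + ((n / 2 ^ ((T + 1) * w) : ℕ) + 1) := by
        rw [← pow_succ']; exact_mod_cast hcount
    _ ≤ 4 * (N : ℝ) ^ e := by linarith
    _ = _ := by simp [N]

lemma dnormStar_indicator_le {p q C : ℝ} (hp : 0 < p) (A : Set ℤ)
    (hA : ∀ (k : ℤ) (n : ℕ),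
      (#{x ∈ Icc k (k + n) | x ∈ A} : ℝ) ≤ C * ((n : ℝ) + 1) ^ (1 - p / q)) :
    dnormStar p q (A.indicator 1) ≤ ENNReal.ofReal (C ^ (1 / p)) := by
  refine iSup₂_le fun k n => ?_
  have hN : (0 : ℝ) < n + 1 := by positivity
  have hsum : ∑ j ∈ Icc k (k + n), |A.indicator 1 j| ^ p =
      (#{x ∈ Icc k (k + n) | x ∈ A} : ℝ) := by
    rw [← sum_boole]
    refine sum_congr rfl fun j _ => ?_
    by_cases hj : j ∈ A <;> simp [hj, hp.ne']
  have hC : 0 ≤ C := nonneg_of_mul_nonneg_left ((Nat.cast_nonneg _).trans (hA k n)) (by positivity)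
  have hcast : ((n : ℝ≥0∞) + 1) ^ (1 / q - 1 / p) =
      ENNReal.ofReal (((n : ℝ) + 1) ^ (1 / q - 1 / p)) := by
    rw [← ENNReal.ofReal_rpow_of_pos hN]
    norm_cast
  rw [hsum, hcast, ← ENNReal.ofReal_mul (by positivity)]
  refine ENNReal.ofReal_le_ofReal ?_
  calc ((n : ℝ) + 1) ^ (1 / q - 1 / p) * (#{x ∈ Icc k (k + n) | x ∈ A} : ℝ) ^ (1 / p)
      ≤ ((n : ℝ) + 1) ^ (1 / q - 1 / p) * (C * ((n : ℝ) + 1) ^ (1 - p / q)) ^ (1 / p) := by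
        gcongr
        exact hA k n
    _ = C ^ (1 / p) * ((n : ℝ) + 1) ^ (1 / q - 1 / p + (1 - p / q) * (1 / p)) := by
        rw [Real.mul_rpow hC (by positivity), ← Real.rpow_mul hN.le, Real.rpow_add hN]
        ring
    _ = C ^ (1 / p) := by
        rw [show 1 / q - 1 / p + (1 - p / q) * (1 / p) = 0 by field_simp; ring, Real.rpow_zero,
          mul_one]

lemma sub_div_le_one_sub_div_of_div_lt_div {p q v w : ℝ} (hp : 0 < p) (hq : 0 < q) (hw : 0 < w)
    (hv : 0 < v) (h : v / w < q / p) : (v - w) / v ≤ 1 - p / q := by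
  have : p / q ≤ w / v := by
    rw [div_lt_div_iff₀ hw hp] at h
    rw [div_le_div_iff₀ hq hv]
    linarith
  calc (v - w) / v = 1 - w / v := by field_simp
    _ ≤ 1 - p / q := by linarith

theorem stmt11 (p₁ q : ℝ) (hp₁ : 1 ≤ p₁) (h1q : p₁ < q)
    (v w : ℕ) (hw : 0 < w) (hvw : w < v) (h₂ : (v : ℝ) / w < q / p₁) :
    dnormStar p₁ q (xseq v w)
        ≤ ENNReal.ofReal (max ((1 : ℝ) + 2 ^ ((v : ℝ) - w)) ((2 : ℝ) ^ ((1 + (v : ℝ) - w) / p₁))) ∧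
      dnormStar p₁ q (xseq v w) ≠ ⊤ := by
  have hp : 0 < p₁ := by linarith
  have hv : (0 : ℝ) < v := by exact_mod_cast hw.trans hvw
  have hwv : (w : ℝ) + 1 ≤ v := by exact_mod_cast hvw
  have hexp := sub_div_le_one_sub_div_of_div_lt_div hp (by linarith) (by exact_mod_cast hw) hv h₂
  have hcount : ∀ (k : ℤ) (n : ℕ), (#{x ∈ Icc k (k + n) | x ∈ xseqSupport v w} : ℝ) ≤
      2 ^ (1 + (v : ℝ) - w) * ((n : ℝ) + 1) ^ (1 - p₁ / q) := fun k n =>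
    calc _ ≤ 4 * ((n : ℝ) + 1) ^ (((v : ℝ) - w) / v) :=
          card_filter_mem_xseqSupport_le_rpow hvw k n
      _ ≤ _ := by
          gcongr
          · calc (4 : ℝ) = 2 ^ (2 : ℝ) := by norm_num
              _ ≤ _ := Real.rpow_le_rpow_of_exponent_le one_le_two (by linarith)
          · exact le_add_of_nonneg_left n.cast_nonneg
  have hbound : dnormStar p₁ q (xseq v w) ≤ ENNReal.ofReal (2 ^ ((1 + (v : ℝ) - w) / p₁)) := by
    rw [xseq_eq_indicator, div_eq_mul_one_div, Real.rpow_mul zero_le_two]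
    exact dnormStar_indicator_le hp _ hcount
  have hle := hbound.trans (ENNReal.ofReal_le_ofReal (le_max_right (1 + 2 ^ ((v : ℝ) - w)) _))
  exact ⟨hle, ne_top_of_le_ne_top ENNReal.ofReal_ne_top hle⟩
end
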